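/- Let M = [a,b) and N = [c,d) be interval modules (0 ≤ a < b, 0 ≤ c < d) with m₁ < m₂, and set r = min{|a−d|, |b−c|} and s = max{|a−d|, |b−c|}. Then m₁ < m₂ < r ≤ s and: (a) for every ε with m₁ ≤ ε < m₂, both Hom(M, N·ε) ≠ 0 and Hom(N, M·ε) ≠ 0, and at least one of Hom(M, M·2ε), Hom(N, N·2ε) is nonzero; (b) for every ε with m₂ ≤ ε < r, both Hom(M, N·ε) ≠ 0 and Hom(N, M·ε) ≠ 0, while Hom(M, M·2ε) = Hom(N, N·2ε) = 0; (c) for every ε with r ≤ ε < s, exactly one of Hom(M, N·ε), Hom(N, M·ε) is nonzero and Hom(M, M·2ε) = Hom(N, N·2ε) = 0; (d) for every ε ≥ s, all four spaces are zero. (This expresses that for interval modules the progression of varieties of ε-interleavings in the case m₁ < m₂ is: hyperbola, plane, axis, origin if r < s, and hyperbola, plane, origin if r = s.) -/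

import Mathlib

open scoped NNReal

/-- A persistence module: a functor from `[0,∞)` to real vector spaces. -/
structure PM where
  V : ℝ≥0 → Type
  [grp : ∀ x, AddCommGroup (V x)]
  [mod : ∀ x, Module ℝ (V x)]
  map : ∀ {x y : ℝ≥0}, x ≤ y → (V x →ₗ[ℝ] V y)
  map_id : ∀ x : ℝ≥0, map (le_refl x) = LinearMap.id
  map_comp : ∀ {x y z : ℝ≥0} (h1 : x ≤ y) (h2 : y ≤ z),
    (map h2).comp (map h1) = map (h1.trans h2)

attribute [instance] PM.grp PM.mod

/-- A morphism of persistence modules. -/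
structure PM.Hom (M N : PM) where
  app : ∀ x : ℝ≥0, M.V x →ₗ[ℝ] N.V x
  comm : ∀ {x y : ℝ≥0} (h : x ≤ y), (app y).comp (M.map h) = (N.map h).comp (app x)

/-- The shifted module `M·ε`. -/
def PM.shift (M : PM) (ε : ℝ≥0) : PM where
  V x := M.V (x + ε)
  grp x := inferInstance
  mod x := inferInstance
  map h := M.map (add_le_add h le_rfl)
  map_id x := M.map_id (x + ε)
  map_comp h1 h2 := M.map_comp _ _

noncomputable def intervalSub (α β : ℝ) (x : ℝ≥0) : Submodule ℝ ℝ :=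
  if α ≤ (x : ℝ) ∧ (x : ℝ) < β then ⊤ else ⊥

/-- The interval module `[α,β)`. -/
noncomputable def intervalModule (α β : ℝ) : PM where
  V x := ↥(intervalSub α β x)
  grp x := inferInstance
  mod x := inferInstance
  map {x y} h := LinearMap.codRestrict _
      ((if α ≤ (x : ℝ) ∧ (y : ℝ) < β then (1 : ℝ) else 0) • (intervalSub α β x).subtype)
      (by
        intro v
        by_cases hy : α ≤ (y : ℝ) ∧ (y : ℝ) < β
        · simp [intervalSub, hy]
        · have hc : ¬(α ≤ (x : ℝ) ∧ (y : ℝ) < β) := by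
            intro hc
            exact hy ⟨le_trans hc.1 (by exact_mod_cast h), hc.2⟩
          rw [if_neg hc, zero_smul, LinearMap.zero_apply]
          exact Submodule.zero_mem _)
  map_id x := by
    ext v
    by_cases hx : α ≤ (x : ℝ) ∧ (x : ℝ) < β
    · simp [hx]
    · have hv : (v : ℝ) = 0 := by
        have h2 := v.2
        simp only [intervalSub, if_neg hx, Submodule.mem_bot] at h2
        exact h2
      simp [hx, hv]
  map_comp {x y z} h1 h2 := by
    ext v
    by_cases hC : α ≤ (x : ℝ) ∧ (z : ℝ) < β
    · have hA : α ≤ (x : ℝ) ∧ (y : ℝ) < β :=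
        ⟨hC.1, lt_of_le_of_lt (by exact_mod_cast h2) hC.2⟩
      have hB : α ≤ (y : ℝ) ∧ (z : ℝ) < β :=
        ⟨le_trans hC.1 (by exact_mod_cast h1), hC.2⟩
      simp [hA, hB, hC]
    · rcases not_and_or.mp hC with hx | hz
      · have hA : ¬(α ≤ (x : ℝ) ∧ (y : ℝ) < β) := fun h => hx h.1
        simp [hA, hC]
        split_ifs <;> simp
      · have hB : ¬(α ≤ (y : ℝ) ∧ (z : ℝ) < β) := fun h => hz h.2
        simp [hB, hC]

/-- `Hom(M,N) ≠ {0}`: there is a nonzero morphism from `M` to `N`. -/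
def HomNeZero (M N : PM) : Prop := ∃ F : PM.Hom M N, ∃ x, F.app x ≠ 0

/-- `S_{M,N} = {x ≥ 0 : Hom(M, N·x) ≠ {0}}`. -/
noncomputable def Sset (M N : PM) : Set ℝ :=
  {x : ℝ | 0 ≤ x ∧ HomNeZero M (N.shift x.toNNReal)}

/-- The canonical morphism `Π_M^{M·τ} : M → M·τ`. -/
def PM.pi (M : PM) (τ : ℝ≥0) : M.Hom (M.shift τ) where
  app x := M.map le_self_add
  comm {x y} h := by
    show (M.map le_self_add).comp (M.map h) =
      (M.map (add_le_add h le_rfl)).comp (M.map le_self_add)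
    rw [M.map_comp, M.map_comp]

/-- The pair `(Φ, Ψ)` is an `ε`-interleaving between `M` and `N`:
`(Ψ·ε) ∘ Φ = Π_M^{M·2ε}` and `(Φ·ε) ∘ Ψ = Π_N^{N·2ε}` (expressed pointwise). -/
def IsInterleaving (M N : PM) (ε : ℝ≥0)
    (Φ : M.Hom (N.shift ε)) (Ψ : N.Hom (M.shift ε)) : Prop :=
  (∀ x : ℝ≥0, (Ψ.app (x + ε)).comp (Φ.app x) =
      M.map (le_self_add.trans le_self_add : x ≤ x + ε + ε)) ∧
  (∀ x : ℝ≥0, (Φ.app (x + ε)).comp (Ψ.app x) =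
      N.map (le_self_add.trans le_self_add : x ≤ x + ε + ε))

/-!
A morphism `F : [a,b) → N` is determined by `v = F(a)(1) ∈ N(a)`, and a vector `v ∈ N(a)` arises
this way exactly when `N(a ≤ b) v = 0`; so `Hom([a,b), N) ≠ 0` iff some nonzero vector of `N(a)`
dies by time `b`. For `N = [c,d)·ε` this says `c ≤ a + ε < d ≤ b + ε`. Once `ε ≥ m₁` the outer two
inequalities are automatic, so `Hom(M, N·ε) ≠ 0 ↔ ε < d - a`, `Hom(N, M·ε) ≠ 0 ↔ ε < b - c`,
`Hom(M, M·2ε) ≠ 0 ↔ 2ε < b - a` and `Hom(N, N·2ε) ≠ 0 ↔ 2ε < d - c`. Since `m₁ < m₂` forces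
`m₂ < d - a` and `m₂ < b - c`, `r` and `s` are the minimum and maximum of `d - a` and `b - c`, and
the four regimes are linear arithmetic.
-/

namespace PM

variable {M N : PM}

theorem map_map_apply {x y z : ℝ≥0} (h₁ : x ≤ y) (h₂ : y ≤ z) (v : M.V x) :
    M.map h₂ (M.map h₁ v) = M.map (h₁.trans h₂) v :=
  LinearMap.congr_fun (M.map_comp h₁ h₂) v

theorem Hom.app_map_apply (F : M.Hom N) {x y : ℝ≥0} (h : x ≤ y) (v : M.V x) :
    F.app y (M.map h v) = N.map h (F.app x v) :=
  LinearMap.congr_fun (F.comm h) v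

end PM

namespace intervalModule

section Basic

variable {α β : ℝ} {x y : ℝ≥0}

theorem mem_intervalSub (hx : α ≤ x ∧ (x : ℝ) < β) (t : ℝ) : t ∈ intervalSub α β x := by
  simp [intervalSub, hx]

def mk (hx : α ≤ x ∧ (x : ℝ) < β) (t : ℝ) : (intervalModule α β).V x :=
  ⟨t, mem_intervalSub hx t⟩

noncomputable def valₗ (x : ℝ≥0) : (intervalModule α β).V x →ₗ[ℝ] ℝ :=
  (intervalSub α β x).subtype

theorem val_zero : Subtype.val (0 : (intervalModule α β).V x) = 0 :=
  rfl

theorem subsingleton_V (hx : ¬(α ≤ x ∧ (x : ℝ) < β)) :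
    Subsingleton ((intervalModule α β).V x) := by
  show Subsingleton (intervalSub α β x)
  rw [intervalSub, if_neg hx]
  infer_instance

theorem map_val (h : x ≤ y) (v : (intervalModule α β).V x) :
    Subtype.val ((intervalModule α β).map h v) =
      (if α ≤ x ∧ (y : ℝ) < β then (1 : ℝ) else 0) * Subtype.val v :=
  rfl

theorem map_surjective (hx : α ≤ x) (hy : (y : ℝ) < β) (h : x ≤ y) :
    Function.Surjective ((intervalModule α β).map h) := fun w =>
  ⟨mk ⟨hx, (NNReal.coe_le_coe.2 h).trans_lt hy⟩ w.1, Subtype.ext (by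
    rw [map_val, if_pos ⟨hx, hy⟩, one_mul]; rfl)⟩

theorem map_eq_zero_of_le (h : x ≤ y) (hy : β ≤ y) (v : (intervalModule α β).V x) :
    (intervalModule α β).map h v = 0 :=
  Subtype.ext (by rw [map_val, if_neg fun h => hy.not_gt h.2, zero_mul, val_zero])

theorem exists_ne_zero_map_eq_zero_iff (h : x ≤ y) :
    (∃ v : (intervalModule α β).V x, v ≠ 0 ∧ (intervalModule α β).map h v = 0) ↔
      α ≤ x ∧ (x : ℝ) < β ∧ β ≤ y := by
  constructor
  · rintro ⟨v, hv0, hv⟩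
    have hx : α ≤ x ∧ (x : ℝ) < β := by
      by_contra hx
      have := subsingleton_V hx
      exact hv0 (Subsingleton.elim _ _)
    refine ⟨hx.1, hx.2, not_lt.1 fun hy => hv0 (Subtype.ext ?_)⟩
    have := congrArg Subtype.val hv
    rwa [map_val, if_pos ⟨hx.1, hy⟩, one_mul] at this
  · rintro ⟨hxα, hxβ, hy⟩
    exact ⟨mk ⟨hxα, hxβ⟩ 1, fun h1 => one_ne_zero (congrArg Subtype.val h1),
      map_eq_zero_of_le h hy _⟩

theorem app_eq_zero_of_not_mem {N : PM} (F : (intervalModule α β).Hom N)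
    (hx : ¬(α ≤ x ∧ (x : ℝ) < β)) : F.app x = 0 := by
  have := subsingleton_V hx
  ext w
  simp [Subsingleton.elim w 0]

end Basic

variable {N : PM} {a b : ℝ≥0}

/-- The morphism `[a,b) → N` sending `1 ∈ [a,b)(a)` to `v`. -/
noncomputable def homOfMapEqZero (hab : a ≤ b) (v : N.V a) (hv : N.map hab v = 0) :
    (intervalModule a b).Hom N where
  app x := if h : a ≤ x then (valₗ x).smulRight (N.map h v) else 0
  comm {x y} hxy := by
    ext w
    by_cases hx : a ≤ x
    · have hy := hx.trans hxy
      simp only [LinearMap.comp_apply, dif_pos hx, dif_pos hy, LinearMap.smulRight_apply, map_smul,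
        PM.map_map_apply]
      show (Subtype.val ((intervalModule a b).map hxy w)) • _ = w.1 • _
      rw [map_val]
      by_cases hyb : (y : ℝ) < b
      · rw [if_pos ⟨NNReal.coe_le_coe.2 hx, hyb⟩, one_mul]
      · have hby : b ≤ y := NNReal.coe_le_coe.1 (not_lt.1 hyb)
        rw [if_neg fun h => hyb h.2, zero_mul, zero_smul, ← PM.map_map_apply hab hby, hv, map_zero,
          smul_zero]
    · have := subsingleton_V (α := a) (β := b) (x := x) fun h => hx (NNReal.coe_le_coe.1 h.1)
      simp [Subsingleton.elim w 0]

theorem homNeZero_iff (hab : a < b) :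
    HomNeZero (intervalModule a b) N ↔ ∃ v : N.V a, v ≠ 0 ∧ N.map hab.le v = 0 := by
  constructor
  · rintro ⟨F, x, hFx⟩
    have hx : (a : ℝ) ≤ x ∧ (x : ℝ) < b := by
      by_contra hx
      exact hFx (app_eq_zero_of_not_mem F hx)
    obtain ⟨w, hw⟩ : ∃ w, F.app x w ≠ 0 := by
      by_contra! h
      exact hFx (LinearMap.ext h)
    obtain ⟨w, rfl⟩ := map_surjective le_rfl hx.2 (NNReal.coe_le_coe.1 hx.1) w
    refine ⟨F.app a w, fun h => hw ?_, ?_⟩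
    · rw [F.app_map_apply, h, map_zero]
    · rw [← F.app_map_apply, map_eq_zero_of_le _ le_rfl, map_zero]
  · rintro ⟨v, hv0, hv⟩
    refine ⟨homOfMapEqZero hab.le v hv, a, fun h => hv0 ?_⟩
    have := LinearMap.congr_fun h (mk ⟨le_rfl, hab⟩ 1)
    simp only [homOfMapEqZero, dif_pos le_rfl, N.map_id, LinearMap.smulRight_apply,
      LinearMap.zero_apply] at this
    exact (smul_eq_zero.1 this).resolve_left one_ne_zero

end intervalModule

theorem homNeZero_intervalModule_shift_iff {a b c d ε : ℝ} (ha : 0 ≤ a) (hab : a < b)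
    (hε : 0 ≤ ε) :
    HomNeZero (intervalModule a b) ((intervalModule c d).shift ε.toNNReal) ↔
      c ≤ a + ε ∧ a + ε < d ∧ d ≤ b + ε := by
  lift a to ℝ≥0 using ha
  lift b to ℝ≥0 using a.2.trans hab.le
  lift ε to ℝ≥0 using hε
  have hab : a < b := by exact_mod_cast hab
  rw [Real.toNNReal_coe, intervalModule.homNeZero_iff hab]
  exact_mod_cast intervalModule.exists_ne_zero_map_eq_zero_iff (by gcongr : a + ε ≤ b + ε)

theorem homNeZero_intervalModule_shift_self_iff {a b τ : ℝ} (ha : 0 ≤ a) (hab : a < b)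
    (hτ : 0 ≤ τ) :
    HomNeZero (intervalModule a b) ((intervalModule a b).shift τ.toNNReal) ↔ τ < b - a := by
  rw [homNeZero_intervalModule_shift_iff ha hab hτ]
  constructor
  · rintro ⟨-, h, -⟩
    linarith
  · intro h
    exact ⟨by linarith, by linarith, by linarith⟩

theorem homNeZero_intervalModule_shift_iff_of_abs_le {a b c d ε : ℝ} (ha : 0 ≤ a) (hab : a < b)
    (hac : |a - c| ≤ ε) (hbd : |b - d| ≤ ε) :
    HomNeZero (intervalModule a b) ((intervalModule c d).shift ε.toNNReal) ↔ ε < d - a := by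
  rw [homNeZero_intervalModule_shift_iff ha hab ((abs_nonneg _).trans hac)]
  have := abs_le.1 hac
  have := abs_le.1 hbd
  constructor
  · rintro ⟨-, h, -⟩
    linarith
  · intro h
    exact ⟨by linarith, by linarith, by linarith⟩

theorem stmt2 (a b c d : ℝ) (ha : 0 ≤ a) (hab : a < b) (hc : 0 ≤ c) (hcd : c < d)
    (m₁ m₂ r s : ℝ)
    (hm1 : m₁ = max |a - c| |b - d|) (hm2 : m₂ = max ((b - a) / 2) ((d - c) / 2))
    (hr : r = min |a - d| |b - c|) (hs : s = max |a - d| |b - c|) (hm : m₁ < m₂) :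
    m₁ < m₂ ∧ m₂ < r ∧ r ≤ s ∧
    (∀ ε : ℝ, m₁ ≤ ε → ε < m₂ →
      HomNeZero (intervalModule a b) ((intervalModule c d).shift (ε).toNNReal) ∧ HomNeZero (intervalModule c d) ((intervalModule a b).shift (ε).toNNReal) ∧
      (HomNeZero (intervalModule a b) ((intervalModule a b).shift (2*ε).toNNReal) ∨ HomNeZero (intervalModule c d) ((intervalModule c d).shift (2*ε).toNNReal))) ∧
    (∀ ε : ℝ, m₂ ≤ ε → ε < r →
      HomNeZero (intervalModule a b) ((intervalModule c d).shift (ε).toNNReal) ∧ HomNeZero (intervalModule c d) ((intervalModule a b).shift (ε).toNNReal) ∧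
      ¬ HomNeZero (intervalModule a b) ((intervalModule a b).shift (2*ε).toNNReal) ∧ ¬ HomNeZero (intervalModule c d) ((intervalModule c d).shift (2*ε).toNNReal)) ∧
    (∀ ε : ℝ, r ≤ ε → ε < s →
      Xor' (HomNeZero (intervalModule a b) ((intervalModule c d).shift (ε).toNNReal)) (HomNeZero (intervalModule c d) ((intervalModule a b).shift (ε).toNNReal)) ∧
      ¬ HomNeZero (intervalModule a b) ((intervalModule a b).shift (2*ε).toNNReal) ∧ ¬ HomNeZero (intervalModule c d) ((intervalModule c d).shift (2*ε).toNNReal)) ∧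
    (∀ ε : ℝ, s ≤ ε →
      ¬ HomNeZero (intervalModule a b) ((intervalModule c d).shift (ε).toNNReal) ∧ ¬ HomNeZero (intervalModule c d) ((intervalModule a b).shift (ε).toNNReal) ∧
      ¬ HomNeZero (intervalModule a b) ((intervalModule a b).shift (2*ε).toNNReal) ∧ ¬ HomNeZero (intervalModule c d) ((intervalModule c d).shift (2*ε).toNNReal)) := by
  have hm₁ : |a - c| ≤ m₁ ∧ |b - d| ≤ m₁ := hm1 ▸ ⟨le_max_left _ _, le_max_right _ _⟩
  have hm₂ : m₂ = (b - a) / 2 ∨ m₂ = (d - c) / 2 := hm2 ▸ max_choice _ _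
  have hac := abs_lt.1 (hm₁.1.trans_lt hm)
  have hbd := abs_lt.1 (hm₁.2.trans_lt hm)
  obtain ⟨hda, hbc⟩ : m₂ < d - a ∧ m₂ < b - c := by
    rcases hm₂ with h | h <;> constructor <;> linarith
  rw [abs_sub_comm a d, abs_of_pos (by linarith : 0 < d - a), abs_of_pos (by linarith : 0 < b - c)]
    at hr hs
  refine ⟨hm, hr ▸ lt_min hda hbc, hr ▸ hs ▸ min_le_max,
    fun ε h₁ _ => ?_, fun ε h₁ _ => ?_, fun ε h₁ _ => ?_, fun ε h₁ => ?_⟩ <;>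
  · have hε : m₁ ≤ ε := by grind
    have hε₁ := hm₁.1.trans hε
    have hε₂ := hm₁.2.trans hε
    have hτ : 0 ≤ 2 * ε := by linarith [(abs_nonneg (a - c)).trans hε₁]
    simp only [Xor'.eq_1, xor_def, homNeZero_intervalModule_shift_iff_of_abs_le ha hab hε₁ hε₂,
      homNeZero_intervalModule_shift_iff_of_abs_le hc hcd (abs_sub_comm a c ▸ hε₁)
        (abs_sub_comm b d ▸ hε₂),
      homNeZero_intervalModule_shift_self_iff ha hab hτ,
      homNeZero_intervalModule_shift_self_iff hc hcd hτ]
    grind
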